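/- Let (𝒮, μ) be a defining pair in a quiver Q and A = KQ/I the algebra it defines. Then A is a special multiserial algebra: for every arrow a there is at most one arrow b with ab ∉ I and at most one arrow c with ca ∉ I. -/
import Mathlib


/-!  A model of the path algebra `KQ` of a finite quiver `Q` (vertex set `V`,
arrow set `A`, source and target maps `s t : A → V`), as the quotient of the
free algebra on `V ⊕ A` by the usual path-algebra relations.  -/

open FreeAlgebra

inductive PathRel (K V A : Type) [Field K] [Fintype V] [DecidableEq V] (s t : A → V) :
    FreeAlgebra K (V ⊕ A) → FreeAlgebra K (V ⊕ A) → Prop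
  | vtxMul : ∀ v w : V,
      PathRel K V A s t (ι K (Sum.inl v) * ι K (Sum.inl w))
        (if v = w then ι K (Sum.inl v) else 0)
  | unit : PathRel K V A s t (∑ v : V, ι K (Sum.inl v)) 1
  | src : ∀ a : A,
      PathRel K V A s t (ι K (Sum.inl (s a)) * ι K (Sum.inr a)) (ι K (Sum.inr a))
  | tgt : ∀ a : A,
      PathRel K V A s t (ι K (Sum.inr a) * ι K (Sum.inl (t a))) (ι K (Sum.inr a))

/-- The path algebra `KQ`. -/
abbrev PathAlg (K V A : Type) [Field K] [Fintype V] [DecidableEq V] (s t : A → V) : Type :=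
  RingQuot (PathRel K V A s t)

section

variable (K V A : Type) [Field K] [Fintype V] [DecidableEq V] (s t : A → V)

/-- The element of `KQ` corresponding to an arrow. -/
noncomputable def arrow (a : A) : PathAlg K V A s t :=
  RingQuot.mkAlgHom K (PathRel K V A s t) (ι K (Sum.inr a))

/-- The idempotent of `KQ` corresponding to a vertex (trivial path). -/
noncomputable def vtx (v : V) : PathAlg K V A s t :=
  RingQuot.mkAlgHom K (PathRel K V A s t) (ι K (Sum.inl v))

/-- The element of `KQ` given by a path, recorded as its list of arrows. -/
noncomputable def pathElem (l : List A) : PathAlg K V A s t :=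
  (l.map (arrow K V A s t)).prod

/-- The ideal `J²`, where `J` is the arrow ideal: it is generated by the
products of two arrows (equivalently, by the paths of length 2). -/
def JSqIdeal : TwoSidedIdeal (PathAlg K V A s t) :=
  TwoSidedIdeal.span {x | ∃ a b : A, x = arrow K V A s t a * arrow K V A s t b}

/-- An ideal `I` of `KQ` is admissible if `J^N ⊆ I ⊆ J²` for some `N ≥ 2`;
`J^N ⊆ I` amounts to all paths of length `N` lying in `I`. -/
def Admissible (I : TwoSidedIdeal (PathAlg K V A s t)) : Prop :=
  ∃ N : ℕ, 2 ≤ N ∧ (∀ l : List A, l.length = N → pathElem K V A s t l ∈ I) ∧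
    I ≤ JSqIdeal K V A s t

/-- Condition (M): for every arrow `a` there is at most one arrow `b` with
`ab ∉ I` and at most one arrow `c` with `ca ∉ I`. -/
def ConditionM (I : TwoSidedIdeal (PathAlg K V A s t)) : Prop :=
  ∀ a : A,
    (∀ b b' : A, arrow K V A s t a * arrow K V A s t b ∉ I →
      arrow K V A s t a * arrow K V A s t b' ∉ I → b = b') ∧
    (∀ c c' : A, arrow K V A s t c * arrow K V A s t a ∉ I →
      arrow K V A s t c' * arrow K V A s t a ∉ I → c = c')

/-- `σ : Q₁ → Q₁ ∪ {⋄}` (with `⋄ = none`): `σ a = some b` iff `ab ∉ I`. -/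
def SigmaSpec (I : TwoSidedIdeal (PathAlg K V A s t)) (σ : A → Option A) : Prop :=
  ∀ a b : A, σ a = some b ↔ arrow K V A s t a * arrow K V A s t b ∉ I

/-- `τ : Q₁ → Q₁ ∪ {⋄}` (with `⋄ = none`): `τ a = some c` iff `ca ∉ I`. -/
def TauSpec (I : TwoSidedIdeal (PathAlg K V A s t)) (τ : A → Option A) : Prop :=
  ∀ a c : A, τ a = some c ↔ arrow K V A s t c * arrow K V A s t a ∉ I

end

/-- Iterate of `σ` (extended to `Q₁ ∪ {⋄}` by `σ(⋄) = ⋄`) applied to an arrow: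
`OIter σ n a = σⁿ(a)`. -/
def OIter {A : Type} (σ : A → Option A) (n : ℕ) (a : A) : Option A :=
  (fun o => o.bind σ)^[n] (some a)

/-- A `(σ,τ)`-maximal path `a₁ ⋯ a_r`: `σ(aᵢ) = a_{i+1}`, `σ(a_r) = ⋄`,
`τ(a₁) = ⋄`. -/
def IsMaximalPath {A : Type} (σ τ : A → Option A) (l : List A) : Prop :=
  l ≠ [] ∧ l.Chain' (fun x y => σ x = some y) ∧
    (∀ x ∈ l.getLast?, σ x = none) ∧ (∀ x ∈ l.head?, τ x = none)

/-- The cycle `C_a = a σ(a) ⋯ σ^{m̂_a−1}(a)`, where `m̂_a` is the least positive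
integer with `σ^{m̂_a}(a) = a`:  `l` has entries the iterates of `σ` at `a` and
length the least positive return time of `a` under `σ`. -/
def IsSigmaCycleOf {A : Type} (σ : A → Option A) (a : A) (l : List A) : Prop :=
  l ≠ [] ∧ (∀ i : ℕ, i < l.length → l[i]? = OIter σ i a) ∧
    OIter σ l.length a = some a ∧
    ∀ k : ℕ, 0 < k → k < l.length → OIter σ k a ≠ some a

/-- A list of arrows is composable (i.e. a genuine path) if the target of each
arrow is the source of the next. -/
def Composable {V A : Type} (s t : A → V) (l : List A) : Prop :=
  l.Chain' (fun a b => t a = s b)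

/-- A simple cycle: a nonempty path with the same start and end vertex and no
repeated arrows. -/
def IsSimpleCycle {V A : Type} (s t : A → V) (l : List A) : Prop :=
  l ≠ [] ∧ Composable s t l ∧ (∀ x ∈ l.head?, ∀ y ∈ l.getLast?, t y = s x) ∧ l.Nodup

/-- The path `C^m` for a cycle `C`. -/
def cyclePow {A : Type} (l : List A) (m : ℕ) : List A := (List.replicate m l).flatten

/-- A defining pair `(𝒮, μ)` in the quiver `Q`: a set `𝒮` of simple cycles and
`μ : 𝒮 → ℤ_{>0}` satisfying (D0)–(D4). -/
def IsDefiningPair {V A : Type} (s t : A → V) (S : Set (List A)) (μ : List A → ℕ) : Prop :=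
  (∀ l ∈ S, IsSimpleCycle s t l) ∧
  (∀ l ∈ S, 0 < μ l) ∧
  (∀ l ∈ S, l.length = 1 → 1 < μ l) ∧
  (∀ l ∈ S, ∀ l' : List A, l.IsRotated l' → l' ∈ S) ∧
  (∀ l ∈ S, ∀ l' ∈ S, l.IsRotated l' → μ l = μ l') ∧
  (∀ a : A, ∃ l ∈ S, a ∈ l) ∧
  (∀ l ∈ S, ∀ l' ∈ S, (∃ a : A, a ∈ l ∧ a ∈ l') → l.IsRotated l')

/-- The set of relations of Types 1, 2 and 3 attached to a defining pair:
Type 1: `C^{μ(C)} − C'^{μ(C')}` for `C, C' ∈ 𝒮` cycles at the same vertex;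
Type 2: `C^{μ(C)} a` for `C ∈ 𝒮` with first arrow `a`;
Type 3: `ab` for arrows `a, b` with `ab` not a subpath of any `C^s`, `C ∈ 𝒮`. -/
def RelSet (K V A : Type) [Field K] [Fintype V] [DecidableEq V] (s t : A → V)
    (S : Set (List A)) (μ : List A → ℕ) : Set (PathAlg K V A s t) :=
  {x | ∃ l ∈ S, ∃ l' ∈ S, ∃ a ∈ l.head?, ∃ a' ∈ l'.head?, s a = s a' ∧
      x = pathElem K V A s t (cyclePow l (μ l)) - pathElem K V A s t (cyclePow l' (μ l'))} ∪
  {x | ∃ l ∈ S, ∃ a ∈ l.head?, x = pathElem K V A s t (cyclePow l (μ l) ++ [a])} ∪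
  {x | ∃ a b : A, x = arrow K V A s t a * arrow K V A s t b ∧
      ∀ l ∈ S, ∀ m : ℕ, ¬ [a, b] <:+: cyclePow l m}

/-- The ideal of relations of a defining pair. -/
def DefIdeal (K V A : Type) [Field K] [Fintype V] [DecidableEq V] (s t : A → V)
    (S : Set (List A)) (μ : List A → ℕ) : TwoSidedIdeal (PathAlg K V A s t) :=
  TwoSidedIdeal.span (RelSet K V A s t S μ)

/-- The relation whose `RingQuot` is the algebra `KQ/I` defined by a defining
pair, `I` generated by the Type 1, 2, 3 relations. -/
def QRel (K V A : Type) [Field K] [Fintype V] [DecidableEq V] (s t : A → V)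
    (S : Set (List A)) (μ : List A → ℕ) :
    PathAlg K V A s t → PathAlg K V A s t → Prop :=
  fun x y => x ∈ RelSet K V A s t S μ ∧ y = 0

/-! ### Auxiliary lemmas -/

lemma cyclePow_succ' {A : Type} (l : List A) (m : ℕ) :
    cyclePow l (m + 1) = l ++ cyclePow l m := by
  simp [cyclePow, List.replicate_succ]

lemma length_cyclePow' {A : Type} (l : List A) (m : ℕ) :
    (cyclePow l m).length = m * l.length := by
  induction m with
  | zero => simp [cyclePow]
  | succ m ih => rw [cyclePow_succ', List.length_append, ih]; ring

lemma getElem?_cyclePow' {A : Type} (l : List A) (m j : ℕ) (hj : j < m * l.length) :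
    (cyclePow l m)[j]? = l[j % l.length]? := by
  induction m generalizing j with
  | zero => simp at hj
  | succ m ih =>
    rw [cyclePow_succ']
    by_cases h : j < l.length
    · rw [List.getElem?_append, if_pos h, Nat.mod_eq_of_lt h]
    · push_neg at h
      rw [List.getElem?_append_right h]
      have hj' : j - l.length < m * l.length := by
        rw [Nat.succ_mul] at hj
        have hx := Nat.sub_lt_sub_right h hj
        simpa using hx
      rw [ih _ hj', Nat.mod_eq_sub_mod h]

lemma mem_of_mem_cyclePow' {A : Type} {x : A} {l : List A} {m : ℕ}
    (h : x ∈ cyclePow l m) : x ∈ l := by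
  simp only [cyclePow, List.mem_flatten] at h
  obtain ⟨L, hL, hx⟩ := h
  rwa [List.eq_of_mem_replicate hL] at hx

/-- Extract the index data of an infix pair in a power of a cycle. -/
lemma pair_infix_index {A : Type} {a b : A} {l : List A} {m : ℕ}
    (h : [a, b] <:+: cyclePow l m) :
    ∃ i, i < l.length ∧ l[i]? = some a ∧ l[(i + 1) % l.length]? = some b := by
  obtain ⟨p, q, hpq⟩ := h
  have hlen : p.length + 2 + q.length = m * l.length := by
    have := congrArg List.length hpq
    simp [length_cyclePow'] at this
    omega
  have hl0 : 0 < l.length := by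
    rcases Nat.eq_zero_or_pos l.length with h0 | h0
    · rw [h0, Nat.mul_zero] at hlen; omega
    · exact h0
  set M := m * l.length with hM
  have hp1 : p.length + 1 < M := by omega
  have hp0 : p.length < M := by omega
  have ha : (cyclePow l m)[p.length]? = some a := by
    rw [← hpq, List.append_assoc, List.getElem?_append_right le_rfl]
    simp
  have hb : (cyclePow l m)[p.length + 1]? = some b := by
    rw [← hpq, List.append_assoc,
      List.getElem?_append_right (by omega : p.length ≤ p.length + 1)]
    simp
  rw [getElem?_cyclePow' l m _ hp0] at ha
  rw [getElem?_cyclePow' l m _ hp1] at hb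
  refine ⟨p.length % l.length, Nat.mod_lt _ hl0, ha, ?_⟩
  rw [Nat.mod_add_mod]
  exact hb

lemma mod_succ_inj' {i i' n : ℕ} (hi : i < n) (hi' : i' < n)
    (h : (i + 1) % n = (i' + 1) % n) : i = i' := by
  rcases Nat.lt_or_ge (i + 1) n with h1 | h1
  · rw [Nat.mod_eq_of_lt h1] at h
    rcases Nat.lt_or_ge (i' + 1) n with h2 | h2
    · rw [Nat.mod_eq_of_lt h2] at h; omega
    · have h3 : i' + 1 = n := by omega
      rw [h3, Nat.mod_self] at h; omega
  · have h3 : i + 1 = n := by omega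
    rcases Nat.lt_or_ge (i' + 1) n with h2 | h2
    · rw [h3, Nat.mod_self, Nat.mod_eq_of_lt h2] at h; omega
    · omega

lemma getElem?_inj_of_nodup {A : Type} {l : List A} (hnd : l.Nodup) {i j : ℕ} {x : A}
    (hi : i < l.length) (hj : j < l.length)
    (h1 : l[i]? = some x) (h2 : l[j]? = some x) : i = j := by
  rw [List.getElem?_eq_getElem hi] at h1
  rw [List.getElem?_eq_getElem hj] at h2
  have : l[i]'hi = l[j]'hj := by
    have := h1.trans h2.symm
    exact Option.some_injective _ this
  exact (hnd.getElem_inj_iff).mp this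

lemma cyclePow_swap {A : Type} (T D : List A) (m : ℕ) :
    cyclePow (T ++ D) (m + 1) = T ++ cyclePow (D ++ T) m ++ D := by
  induction m with
  | zero => simp [cyclePow]
  | succ m ih =>
    rw [cyclePow_succ', ih, cyclePow_succ']
    simp [List.append_assoc]

/-- A power of a rotation of `l` is an infix of a power of `l`. -/
lemma cyclePow_rotated_infix {A : Type} {l l' : List A} (hr : l.IsRotated l') (m : ℕ) :
    cyclePow l' m <:+: cyclePow l (m + 1) := by
  obtain ⟨n, rfl⟩ := hr
  rw [List.rotate_eq_drop_append_take_mod]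
  have hl : l = l.take (n % l.length) ++ l.drop (n % l.length) :=
    (List.take_append_drop _ l).symm
  calc cyclePow (l.drop (n % l.length) ++ l.take (n % l.length)) m
      <:+: l.take (n % l.length) ++
        cyclePow (l.drop (n % l.length) ++ l.take (n % l.length)) m ++
        l.drop (n % l.length) :=
        ⟨l.take (n % l.length), l.drop (n % l.length), by simp [List.append_assoc]⟩
    _ = cyclePow l (m + 1) := by rw [← cyclePow_swap, ← hl]

/-- Uniqueness of the cyclic successor. -/
lemma succ_unique {A : Type} {l l' : List A} (hnd : l.Nodup) (hr : l.IsRotated l')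
    {a b b' : A} {m m' : ℕ} (h : [a, b] <:+: cyclePow l m)
    (h' : [a, b'] <:+: cyclePow l' m') : b = b' := by
  have h'' : [a, b'] <:+: cyclePow l (m' + 1) :=
    h'.trans (cyclePow_rotated_infix hr m')
  obtain ⟨i, hi, hia, hib⟩ := pair_infix_index h
  obtain ⟨j, hj, hja, hjb⟩ := pair_infix_index h''
  have hij : i = j := getElem?_inj_of_nodup hnd hi hj hia hja
  rw [hij] at hib
  exact Option.some_injective _ (hib.symm.trans hjb)

/-- Uniqueness of the cyclic predecessor. -/
lemma pred_unique {A : Type} {l l' : List A} (hnd : l.Nodup) (hr : l.IsRotated l')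
    {a c c' : A} {m m' : ℕ} (h : [c, a] <:+: cyclePow l m)
    (h' : [c', a] <:+: cyclePow l' m') : c = c' := by
  have h'' : [c', a] <:+: cyclePow l (m' + 1) :=
    h'.trans (cyclePow_rotated_infix hr m')
  obtain ⟨i, hi, hic, hia⟩ := pair_infix_index h
  obtain ⟨j, hj, hjc, hja⟩ := pair_infix_index h''
  have hl0 : 0 < l.length := by omega
  have h1 : (i + 1) % l.length = (j + 1) % l.length :=
    getElem?_inj_of_nodup hnd (Nat.mod_lt _ hl0) (Nat.mod_lt _ hl0) hia hja
  have hij : i = j := mod_succ_inj' hi hj h1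
  rw [hij] at hic
  exact Option.some_injective _ (hic.symm.trans hjc)

/-- The algebra `A = KQ/I` defined by a defining pair
`(𝒮, μ)` is special multiserial: for every arrow `a` there is at most one
arrow `b` with `ab ∉ I` and at most one arrow `c` with `ca ∉ I`. -/
theorem defIdeal_conditionM
    (K V A : Type) [Field K] [Fintype V] [DecidableEq V] [Fintype A] (s t : A → V)
    (S : Set (List A)) (μ : List A → ℕ) (hS : IsDefiningPair s t S μ) :
    ConditionM K V A s t (DefIdeal K V A s t S μ) := by
  obtain ⟨hSimple, -, -, -, -, -, hUniq⟩ := hS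
  have key : ∀ a b : A, arrow K V A s t a * arrow K V A s t b ∉ DefIdeal K V A s t S μ →
      ∃ l ∈ S, ∃ m : ℕ, [a, b] <:+: cyclePow l m := by
    intro a b hnot
    by_contra hc
    push_neg at hc
    refine hnot (TwoSidedIdeal.subset_span ?_)
    exact Or.inr ⟨a, b, rfl, fun l hl m => hc l hl m⟩
  intro a
  constructor
  · intro b b' hb hb'
    obtain ⟨l, hl, m, hinf⟩ := key a b hb
    obtain ⟨l', hl', m', hinf'⟩ := key a b' hb'
    have ha : a ∈ l := mem_of_mem_cyclePow' (hinf.subset (by simp))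
    have ha' : a ∈ l' := mem_of_mem_cyclePow' (hinf'.subset (by simp))
    have hrot : l.IsRotated l' := hUniq l hl l' hl' ⟨a, ha, ha'⟩
    exact succ_unique (hSimple l hl).2.2.2 hrot hinf hinf'
  · intro c c' hc hc'
    obtain ⟨l, hl, m, hinf⟩ := key c a hc
    obtain ⟨l', hl', m', hinf'⟩ := key c' a hc'
    have ha : a ∈ l := mem_of_mem_cyclePow' (hinf.subset (by simp))
    have ha' : a ∈ l' := mem_of_mem_cyclePow' (hinf'.subset (by simp))
    have hrot : l.IsRotated l' := hUniq l hl l' hl' ⟨a, ha, ha'⟩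
    exact pred_unique (hSimple l hl).2.2.2 hrot hinf hinf'
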